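/- Let μ_n, μ be finite measures on [0, ∞) whose Laplace transforms satisfy ∫ e^{−tλ} μ_n(dλ) → ∫ e^{−tλ} μ(dλ) for every t > 0, and μ_n([0,∞)) → μ([0,∞)). Then μ_n → μ weakly. Moreover if μ = c δ_ρ + μ' with μ'([0, ρ + ε)) = 0 and c > 0, and each μ_n = c_n δ_{ρ_n} + μ_n' with μ_n'([0, λ]) = 0 for a fixed λ > ρ and ρ_n ∈ [0, λ'] with λ' < λ, then ρ_n → ρ and c_n → c. -/

import Mathlib

/-!
Since `e^{-kx} = (e^{-x})^k`, convergence of the masses and of the Laplace transforms is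
convergence of the integrals of `p (e^{-x})` for every polynomial `p`, hence, by Weierstrass, of
`g (e^{-x})` for every continuous `g` on `[0, 1]`. These include every continuous `u` vanishing on
a half-line `[R, ∞)`, which gives tightness and then weak convergence.

For the atoms, a bump `f` at `ρ` supported in `(ρ - η, ρ + η)`, with `η` below the gaps `ε` and
`λ - ρ`, sees only the atoms: `∫ f dμ = c` and `∫ f dμ_n = c_n f(ρ_n)`. As `c > 0`, eventually
`f(ρ_n) ≠ 0`, i.e. `|ρ_n - ρ| < η`; and then `c_n = ∫ f dμ_n / f(ρ_n) → c`.
-/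

open MeasureTheory Filter NNReal Topology Set Real
open scoped BoundedContinuousFunction

lemma tendsto_of_forall_approx {ι : Type*} {l : Filter ι} {a : ι → ℝ} {A : ℝ} (C : ℝ)
    (h : ∀ δ > 0, ∃ b : ι → ℝ, ∃ B, Tendsto b l (𝓝 B) ∧
      (∀ᶠ i in l, |a i - b i| ≤ C * δ) ∧ |A - B| ≤ C * δ) :
    Tendsto a l (𝓝 A) := by
  refine Metric.tendsto_nhds.2 fun ε hε => ?_
  have hδ : 0 < ε / (3 * (|C| + 1)) := by positivity
  have hCδ : C * (ε / (3 * (|C| + 1))) < ε / 3 :=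
    calc C * (ε / (3 * (|C| + 1))) ≤ |C| * (ε / (3 * (|C| + 1))) := by gcongr; exact le_abs_self C
      _ < (|C| + 1) * (ε / (3 * (|C| + 1))) := by gcongr; exact lt_add_one _
      _ = ε / 3 := by field_simp
  obtain ⟨b, B, hb, hab, hAB⟩ := h _ hδ
  filter_upwards [hab, Metric.tendsto_nhds.1 hb (ε / 3) (by positivity)] with i hi hbi
  rw [Real.dist_eq] at hbi ⊢
  have := abs_sub_le (a i) (b i) A
  have := abs_sub_le (b i) B A
  rw [abs_sub_comm B A] at this
  linarith

lemma ae_le_of_measure_Iio_eq_zero {ν : Measure ℝ} {b : ℝ} (h : ν (Iio b) = 0) :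
    ∀ᵐ x ∂ν, b ≤ x := by
  rw [ae_iff]
  simp only [not_le]
  exact h

lemma exp_neg_mem_Icc {x : ℝ} (hx : 0 ≤ x) : exp (-x) ∈ Icc (0 : ℝ) 1 :=
  ⟨(exp_pos _).le, exp_le_one_iff.2 (neg_nonpos.2 hx)⟩

lemma integrable_comp_exp_neg {ν : Measure ℝ} [IsFiniteMeasure ν] (hν : ν (Iio 0) = 0)
    {g : ℝ → ℝ} (hg : Continuous g) : Integrable (fun x => g (exp (-x))) ν := by
  obtain ⟨M, hM⟩ := (isCompact_Icc (a := (0 : ℝ)) (b := 1)).exists_bound_of_continuousOn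
    hg.continuousOn
  refine .of_bound (by fun_prop) M ?_
  filter_upwards [ae_le_of_measure_Iio_eq_zero hν] with x hx
  exact hM _ (exp_neg_mem_Icc hx)

lemma abs_integral_comp_exp_neg_sub_le {ν : Measure ℝ} [IsFiniteMeasure ν] (hν : ν (Iio 0) = 0)
    {g h : ℝ → ℝ} (hg : Continuous g) (hh : Continuous h) {δ : ℝ}
    (hgh : ∀ y ∈ Icc (0 : ℝ) 1, |g y - h y| ≤ δ) :
    |∫ x, g (exp (-x)) ∂ν - ∫ x, h (exp (-x)) ∂ν| ≤ δ * ν.real univ := by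
  rw [← integral_sub (integrable_comp_exp_neg hν hg) (integrable_comp_exp_neg hν hh),
    ← Real.norm_eq_abs]
  refine norm_integral_le_of_norm_le_const ?_
  filter_upwards [ae_le_of_measure_Iio_eq_zero hν] with x hx
  exact hgh _ (exp_neg_mem_Icc hx)

def rampAt (T : ℝ) : ℝ →ᵇ ℝ :=
  .mkOfBound ⟨fun x => min 1 (max 0 (x - T)), by fun_prop⟩ 1 fun x y =>
    Real.dist_le_of_mem_Icc_01 ⟨le_min zero_le_one (le_max_left _ _), min_le_left _ _⟩
      ⟨le_min zero_le_one (le_max_left _ _), min_le_left _ _⟩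

lemma rampAt_apply (T x : ℝ) : rampAt T x = min 1 (max 0 (x - T)) := rfl

lemma rampAt_nonneg (T x : ℝ) : 0 ≤ rampAt T x := le_min zero_le_one (le_max_left _ _)

lemma rampAt_le_one (T x : ℝ) : rampAt T x ≤ 1 := min_le_left _ _

lemma rampAt_of_le {T x : ℝ} (hx : x ≤ T) : rampAt T x = 0 := by
  rw [rampAt_apply, max_eq_left (by linarith), min_eq_right zero_le_one]

lemma rampAt_of_ge {T x : ℝ} (hx : T + 1 ≤ x) : rampAt T x = 1 := by
  rw [rampAt_apply, max_eq_right (by linarith), min_eq_left (by linarith)]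

lemma tendsto_integral_rampAt_atTop (ν : Measure ℝ) [IsFiniteMeasure ν] :
    Tendsto (fun T => ∫ x, rampAt T x ∂ν) atTop (𝓝 0) := by
  have hlim : ∀ x, Tendsto (fun T => rampAt T x) atTop (𝓝 0) := fun x =>
    tendsto_const_nhds.congr' ((eventually_ge_atTop x).mono fun T hT => (rampAt_of_le hT).symm)
  simpa using tendsto_integral_filter_of_dominated_convergence (fun _ => 1)
    (.of_forall fun T => (rampAt T).continuous.aestronglyMeasurable)
    (.of_forall fun T => .of_forall fun x => by
      rw [Real.norm_of_nonneg (rampAt_nonneg T x)]; exact rampAt_le_one T x)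
    (integrable_const 1) (.of_forall hlim)

lemma exists_bounded_apply_eq_one_support_subset_ball {X : Type*} [MetricSpace X] (a : X)
    {η : ℝ} (hη : 0 < η) : ∃ f : X →ᵇ ℝ, f a = 1 ∧ Function.support f ⊆ Metric.ball a η := by
  obtain ⟨f, hf0, hf1, -⟩ := exists_bounded_zero_one_of_closed (s := (Metric.ball a η)ᶜ)
    (t := {a}) Metric.isOpen_ball.isClosed_compl isClosed_singleton
    (disjoint_singleton_right.2 fun h => h (Metric.mem_ball_self hη))
  exact ⟨f, hf1 rfl, fun x hx => by_contra fun hxa => hx (hf0 hxa)⟩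

lemma integral_smul_dirac_add_of_measure_support_eq_zero {X : Type*} [MeasurableSpace X]
    [TopologicalSpace X] [OpensMeasurableSpace X] [MeasurableSingletonClass X] (f : X →ᵇ ℝ)
    (c : ℝ≥0) (a : X) {ν : Measure X} (hν : ν (Function.support f) = 0) :
    ∫ x, f x ∂(c • Measure.dirac a + ν) = c * f a := by
  have hf : f =ᵐ[ν] 0 := ae_iff.2 hν
  rw [integral_add_measure (f.integrable _) ((integrable_zero _ _ _).congr hf.symm),
    integral_smul_nnreal_measure, integral_dirac, integral_congr_ae hf]
  simp [NNReal.smul_def]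

structure LaplaceTendsto (μn : ℕ → Measure ℝ) (μ : Measure ℝ) : Prop where
  supp : ∀ n, μn n (Iio 0) = 0
  supp_lim : μ (Iio 0) = 0
  laplace : ∀ t : ℝ, 0 < t →
    Tendsto (fun n => ∫ x, exp (-(t * x)) ∂μn n) atTop (𝓝 (∫ x, exp (-(t * x)) ∂μ))
  mass : Tendsto (fun n => (μn n).real univ) atTop (𝓝 (μ.real univ))

namespace LaplaceTendsto

variable {μn : ℕ → Measure ℝ} {μ : Measure ℝ}

theorem tendsto_integral_exp_neg_pow (h : LaplaceTendsto μn μ) (k : ℕ) :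
    Tendsto (fun n => ∫ x, exp (-x) ^ k ∂μn n) atTop (𝓝 (∫ x, exp (-x) ^ k ∂μ)) := by
  rcases k.eq_zero_or_pos with rfl | hk
  · simpa using h.mass
  · have hpow : ∀ x, exp (-x) ^ k = exp (-((k : ℝ) * x)) := fun x => by
      rw [← exp_nat_mul, mul_neg]
    simpa only [hpow] using h.laplace k (by exact_mod_cast hk)

variable [∀ n, IsFiniteMeasure (μn n)] [IsFiniteMeasure μ]

theorem tendsto_integral_eval_exp_neg (h : LaplaceTendsto μn μ) (p : Polynomial ℝ) :
    Tendsto (fun n => ∫ x, p.eval (exp (-x)) ∂μn n) atTop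
      (𝓝 (∫ x, p.eval (exp (-x)) ∂μ)) := by
  induction p using Polynomial.induction_on' with
  | add p q hp hq =>
    have hadd : ∀ (ν : Measure ℝ) [IsFiniteMeasure ν], ν (Iio 0) = 0 →
        ∫ x, (p + q).eval (exp (-x)) ∂ν =
          ∫ x, p.eval (exp (-x)) ∂ν + ∫ x, q.eval (exp (-x)) ∂ν := fun ν _ hν => by
      simp only [Polynomial.eval_add]
      exact integral_add (integrable_comp_exp_neg hν p.continuous)
        (integrable_comp_exp_neg hν q.continuous)
    simp_rw [fun n => hadd (μn n) (h.supp n), hadd μ h.supp_lim]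
    exact hp.add hq
  | monomial k a =>
    simp_rw [Polynomial.eval_monomial, integral_const_mul]
    exact (h.tendsto_integral_exp_neg_pow k).const_mul a

theorem tendsto_integral_comp_exp_neg (h : LaplaceTendsto μn μ) {g : ℝ → ℝ}
    (hg : Continuous g) :
    Tendsto (fun n => ∫ x, g (exp (-x)) ∂μn n) atTop (𝓝 (∫ x, g (exp (-x)) ∂μ)) := by
  refine tendsto_of_forall_approx (μ.real univ + 1) fun δ hδ => ?_
  obtain ⟨p, hp⟩ := exists_polynomial_near_of_continuousOn 0 1 g hg.continuousOn δ hδ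
  have hbound : ∀ (ν : Measure ℝ) [IsFiniteMeasure ν], ν (Iio 0) = 0 →
      ν.real univ ≤ μ.real univ + 1 →
      |∫ x, g (exp (-x)) ∂ν - ∫ x, p.eval (exp (-x)) ∂ν| ≤ (μ.real univ + 1) * δ := by
    intro ν _ hν hmass
    refine (abs_integral_comp_exp_neg_sub_le (δ := δ) hν hg p.continuous fun y hy => ?_).trans
      (by nlinarith)
    rw [abs_sub_comm]
    exact (hp y hy).le
  refine ⟨_, _, h.tendsto_integral_eval_exp_neg p, ?_, hbound μ h.supp_lim (by linarith)⟩
  filter_upwards [h.mass.eventually (gt_mem_nhds (lt_add_one _))] with n hn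
  exact hbound _ (h.supp n) hn.le

theorem tendsto_integral_of_eq_zero_of_le (h : LaplaceTendsto μn μ) {u : ℝ → ℝ}
    (hu : Continuous u) {R : ℝ} (hR : ∀ x, R ≤ x → u x = 0) :
    Tendsto (fun n => ∫ x, u x ∂μn n) atTop (𝓝 (∫ x, u x ∂μ)) := by
  set g : ℝ → ℝ := fun y => u (-log (max y (exp (-R))))
  have hg : Continuous g := hu.comp ((continuous_id.max continuous_const).log
    fun y => ((exp_pos _).trans_le (le_max_right _ _)).ne').neg
  have hgu : ∀ x, g (exp (-x)) = u x := by
    intro x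
    rcases le_total x R with hx | hx
    · simp [g, max_eq_left (exp_le_exp.2 (neg_le_neg hx))]
    · simp [g, max_eq_right (exp_le_exp.2 (neg_le_neg hx)), hR x hx, hR R le_rfl]
  simpa only [hgu] using h.tendsto_integral_comp_exp_neg hg

theorem tendsto_integral_rampAt (h : LaplaceTendsto μn μ) (T : ℝ) :
    Tendsto (fun n => ∫ x, rampAt T x ∂μn n) atTop (𝓝 (∫ x, rampAt T x ∂μ)) := by
  have hsplit : ∀ (ν : Measure ℝ) [IsFiniteMeasure ν],
      ∫ x, rampAt T x ∂ν = ν.real univ - ∫ x, (1 - rampAt T x) ∂ν := fun ν _ => by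
    rw [integral_sub (integrable_const 1) ((rampAt T).integrable ν)]
    simp
  simp only [hsplit]
  exact h.mass.sub (h.tendsto_integral_of_eq_zero_of_le (by fun_prop) fun x hx => by
    rw [rampAt_of_ge hx, sub_self])

theorem tendsto_integral (h : LaplaceTendsto μn μ) (f : ℝ →ᵇ ℝ) :
    Tendsto (fun n => ∫ x, f x ∂μn n) atTop (𝓝 (∫ x, f x ∂μ)) := by
  have htail : ∀ (ν : Measure ℝ) [IsFiniteMeasure ν] (T : ℝ),
      |∫ x, f x ∂ν - ∫ x, f x * (1 - rampAt T x) ∂ν| ≤ ‖f‖ * ∫ x, rampAt T x ∂ν := by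
    intro ν _ T
    have hint : Integrable (fun x => f x * (1 - rampAt T x)) ν := (f * (1 - rampAt T)).integrable ν
    rw [← integral_sub (f.integrable ν) hint,
      ← integral_const_mul, ← Real.norm_eq_abs]
    refine norm_integral_le_of_norm_le (((rampAt T).integrable ν).const_mul _)
      (.of_forall fun x => ?_)
    rw [show f x - f x * (1 - rampAt T x) = f x * rampAt T x by ring, norm_mul,
      Real.norm_of_nonneg (rampAt_nonneg T x)]
    exact mul_le_mul_of_nonneg_right (f.norm_coe_le_norm x) (rampAt_nonneg T x)
  refine tendsto_of_forall_approx ‖f‖ fun δ hδ => ?_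
  obtain ⟨T, hT⟩ := ((tendsto_integral_rampAt_atTop μ).eventually (gt_mem_nhds hδ)).exists
  refine ⟨_, _, h.tendsto_integral_of_eq_zero_of_le (R := T + 1) (by fun_prop)
    fun x hx => by rw [rampAt_of_ge hx, sub_self, mul_zero], ?_,
    (htail μ T).trans (mul_le_mul_of_nonneg_left hT.le (norm_nonneg f))⟩
  filter_upwards [(h.tendsto_integral_rampAt T).eventually (gt_mem_nhds hT)] with n hn
  exact (htail _ T).trans (mul_le_mul_of_nonneg_left hn.le (norm_nonneg f))

end LaplaceTendsto

section Atoms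

variable {μn μn' : ℕ → Measure ℝ} {μ μ' : Measure ℝ} {c : ℝ≥0} {cn : ℕ → ℝ≥0} {ρ ε lam : ℝ}
  {ρn : ℕ → ℝ}

theorem tendsto_mul_apply_of_tendsto_integral
    (hweak : ∀ f : ℝ →ᵇ ℝ, Tendsto (fun n => ∫ x, f x ∂μn n) atTop (𝓝 (∫ x, f x ∂μ)))
    (hμ : μ = c • Measure.dirac ρ + μ') (hμ' : μ' (Iio (ρ + ε)) = 0)
    (hμn : ∀ n, μn n = cn n • Measure.dirac (ρn n) + μn' n) (hμn' : ∀ n, μn' n (Iic lam) = 0)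
    {f : ℝ →ᵇ ℝ} (hfε : Function.support f ⊆ Iio (ρ + ε))
    (hflam : Function.support f ⊆ Iic lam) :
    Tendsto (fun n => cn n * f (ρn n)) atTop (𝓝 (c * f ρ)) := by
  have hlim : ∫ x, f x ∂μ = c * f ρ := by
    rw [hμ, integral_smul_dirac_add_of_measure_support_eq_zero f c ρ (measure_mono_null hfε hμ')]
  refine hlim ▸ (hweak f).congr fun n => ?_
  rw [hμn n, integral_smul_dirac_add_of_measure_support_eq_zero f _ _
    (measure_mono_null hflam (hμn' n))]

theorem tendsto_atom_of_tendsto_integral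
    (hweak : ∀ f : ℝ →ᵇ ℝ, Tendsto (fun n => ∫ x, f x ∂μn n) atTop (𝓝 (∫ x, f x ∂μ)))
    (hμ : μ = c • Measure.dirac ρ + μ') (hc : 0 < c) (hε : 0 < ε) (hμ' : μ' (Iio (ρ + ε)) = 0)
    (hμn : ∀ n, μn n = cn n • Measure.dirac (ρn n) + μn' n) (hρ : ρ < lam)
    (hμn' : ∀ n, μn' n (Iic lam) = 0) :
    Tendsto ρn atTop (𝓝 ρ) ∧ Tendsto (fun n => (cn n : ℝ)) atTop (𝓝 c) := by
  have hη₀ : 0 < min ε (lam - ρ) := lt_min hε (sub_pos.2 hρ)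
  have hbump : ∀ η, 0 < η → η ≤ min ε (lam - ρ) → ∃ f : ℝ →ᵇ ℝ, f ρ = 1 ∧
      Function.support f ⊆ Metric.ball ρ η ∧
      Tendsto (fun n => cn n * f (ρn n)) atTop (𝓝 c) := by
    intro η hη hηle
    obtain ⟨f, hf1, hfsupp⟩ := exists_bounded_apply_eq_one_support_subset_ball ρ hη
    obtain ⟨hηε, hηlam⟩ := le_min_iff.1 hηle
    have hball : Metric.ball ρ η ⊆ Iio (ρ + ε) ∩ Iic lam := fun x hx => by
      rw [Real.ball_eq_Ioo] at hx
      exact ⟨mem_Iio.2 (by linarith [hx.2]), mem_Iic.2 (by linarith [hx.2])⟩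
    refine ⟨f, hf1, hfsupp, ?_⟩
    simpa [hf1] using tendsto_mul_apply_of_tendsto_integral hweak hμ hμ' hμn hμn'
      (hfsupp.trans (hball.trans inter_subset_left)) (hfsupp.trans (hball.trans inter_subset_right))
  have hρn : Tendsto ρn atTop (𝓝 ρ) := by
    refine Metric.tendsto_nhds.2 fun η hη => ?_
    obtain ⟨f, -, hfsupp, hf⟩ := hbump _ (lt_min hη hη₀) (min_le_right _ _)
    filter_upwards [hf.eventually_ne (NNReal.coe_pos.2 hc).ne'] with n hn
    exact (hfsupp (right_ne_zero_of_mul hn)).trans_le (min_le_left _ _)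
  obtain ⟨f, hf1, -, hf⟩ := hbump _ hη₀ le_rfl
  have hfρn : Tendsto (fun n => f (ρn n)) atTop (𝓝 1) :=
    hf1 ▸ (f.continuous.tendsto ρ).comp hρn
  refine ⟨hρn, ?_⟩
  simpa using (hf.div hfρn one_ne_zero).congr' <| (hfρn.eventually_ne one_ne_zero).mono
    fun n hn => mul_div_cancel_right₀ _ hn

end Atoms

/-- convergence of Laplace transforms of finite measures on `[0, ∞)`
(together with convergence of total masses) implies weak convergence; moreover, under a
uniform spectral-gap decomposition `μ_n = c_n δ_{ρ_n} + μ_n'` with atoms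
`ρ_n ∈ [0, λ']`, `λ' < λ`, continuous parts supported in `[λ, ∞)`, and limit
`μ = c δ_ρ + μ'` with `c > 0` and `μ'` vanishing on `[0, ρ + ε)`, the atoms and their
masses converge: `ρ_n → ρ` and `c_n → c`. -/
theorem stmt17 (μn : ℕ → Measure ℝ) (μ : Measure ℝ)
    [∀ n, IsFiniteMeasure (μn n)] [IsFiniteMeasure μ]
    (hsupp : ∀ n, μn n (Set.Iio 0) = 0) (hsupp' : μ (Set.Iio 0) = 0)
    (hLaplace : ∀ t : ℝ, 0 < t →
      Tendsto (fun n => ∫ lam, Real.exp (-(t * lam)) ∂(μn n)) atTop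
        (nhds (∫ lam, Real.exp (-(t * lam)) ∂μ)))
    (hmass : Tendsto (fun n => (μn n Set.univ).toReal) atTop (nhds (μ Set.univ).toReal)) :
    (∀ f : BoundedContinuousFunction ℝ ℝ,
      Tendsto (fun n => ∫ lam, f lam ∂(μn n)) atTop (nhds (∫ lam, f lam ∂μ))) ∧
    (∀ (c : ℝ≥0) (ρ ε : ℝ) (μ' : Measure ℝ) (cn : ℕ → ℝ≥0) (ρn : ℕ → ℝ)
        (μn' : ℕ → Measure ℝ) (lam lam' : ℝ),
        μ = c • Measure.dirac ρ + μ' → 0 < c → 0 ≤ ρ → 0 < ε →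
        μ' (Set.Iio (ρ + ε)) = 0 →
        (∀ n, μn n = cn n • Measure.dirac (ρn n) + μn' n) →
        ρ < lam' → lam' < lam →
        (∀ n, μn' n (Set.Iic lam) = 0) →
        (∀ n, ρn n ∈ Set.Icc 0 lam') →
        Tendsto ρn atTop (nhds ρ) ∧ Tendsto (fun n => (cn n : ℝ)) atTop (nhds (c : ℝ))) := by
  have h : LaplaceTendsto μn μ := ⟨hsupp, hsupp', hLaplace, hmass⟩
  refine ⟨h.tendsto_integral, fun c ρ ε μ' cn ρn μn' lam lam' hμ hc _ hε hμ' hμn hρ hlam hμn' _ =>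
    tendsto_atom_of_tendsto_integral h.tendsto_integral hμ hc hε hμ' hμn (hρ.trans hlam) hμn'⟩
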